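/- Let I = ℕ^k and for h ∈ {1,…,k} define (y₁,…,y_k) R_h (z₁,…,z_k) iff y_h < z_h. For an Erdős tree T over R₁,…,R_k, let ĥ(T) := h_k(T_α, ω·k), where T_α is T viewed as a k-branching tree whose nodes carry the decreasing ordinal labels given by the labelling α. If T and T' are Erdős trees over R₁,…,R_k and T' ≻₁ T, then ĥ(T') < ĥ(T). Moreover ĥ maps Erdős trees into ω^k + 1, with ĥ(empty tree) = ω^k and ĥ(T) < ω^k for every nonempty Erdős tree T. -/

import Mathlib

universe u

/-- Natural (Hessenberg) sum of ordinals, as in the older Mathlib. -/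
noncomputable def Ordinal.nadd (a b : Ordinal.{u}) : Ordinal.{u} :=
  max (⨆ x : Set.Iio a, Order.succ (Ordinal.nadd x.1 b))
    (⨆ x : Set.Iio b, Order.succ (Ordinal.nadd a x.1))
termination_by (a, b)
decreasing_by
  · exact Prod.Lex.left _ _ x.2
  · exact Prod.Lex.right _ x.2

theorem Ordinal.nadd_le_iff' (a b c : Ordinal.{u}) :
    Ordinal.nadd a b ≤ c ↔ (∀ a' < a, Ordinal.nadd a' b < c) ∧ ∀ b' < b, Ordinal.nadd a b' < c := by
  rw [Ordinal.nadd, max_le_iff, Ordinal.iSup_le_iff, Ordinal.iSup_le_iff]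
  simp only [Order.succ_le_iff, Subtype.forall, Set.mem_Iio]

theorem Ordinal.nadd_lt_nadd_left' (a : Ordinal.{u}) {b c : Ordinal.{u}} (h : b < c) :
    Ordinal.nadd a b < Ordinal.nadd a c :=
  ((Ordinal.nadd_le_iff' a c _).1 le_rfl).2 b h

theorem Ordinal.nadd_lt_nadd_right' {a b : Ordinal.{u}} (h : a < b) (c : Ordinal.{u}) :
    Ordinal.nadd a c < Ordinal.nadd b c :=
  ((Ordinal.nadd_le_iff' b c _).1 le_rfl).1 a h

theorem Ordinal.nadd_le_nadd_left' (a : Ordinal.{u}) {b c : Ordinal.{u}} (h : b ≤ c) :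
    Ordinal.nadd a b ≤ Ordinal.nadd a c := by
  rcases h.lt_or_eq with h | h
  · exact (Ordinal.nadd_lt_nadd_left' a h).le
  · rw [h]

theorem Ordinal.nadd_le_nadd_right' {a b : Ordinal.{u}} (h : a ≤ b) (c : Ordinal.{u}) :
    Ordinal.nadd a c ≤ Ordinal.nadd b c := by
  rcases h.lt_or_eq with h | h
  · exact (Ordinal.nadd_lt_nadd_right' h c).le
  · rw [h]

theorem Ordinal.lt_nadd_iff' (a b c : Ordinal.{u}) :
    c < Ordinal.nadd a b ↔ (∃ a' < a, c ≤ Ordinal.nadd a' b) ∨ ∃ b' < b, c ≤ Ordinal.nadd a b' := by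
  rw [← not_le, Ordinal.nadd_le_iff']
  simp only [not_and_or, not_forall, not_lt, exists_prop]

theorem Ordinal.nadd_comm' (a b : Ordinal.{u}) : Ordinal.nadd a b = Ordinal.nadd b a := by
  induction a using WellFoundedLT.induction generalizing b with
  | _ a iha =>
  induction b using WellFoundedLT.induction with
  | _ b ihb =>
  rw [Ordinal.nadd.eq_1 a b, Ordinal.nadd.eq_1 b a, max_comm]
  congr 1
  · congr 1
    funext x
    rw [ihb x.1 x.2]
  · congr 1
    funext x
    rw [iha x.1 x.2]

theorem Ordinal.zero_nadd' (a : Ordinal.{u}) : Ordinal.nadd 0 a = a := by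
  induction a using WellFoundedLT.induction with
  | _ a ih =>
  apply le_antisymm
  · rw [Ordinal.nadd_le_iff']
    refine ⟨fun a' h => absurd h (by simp), fun b' h => ?_⟩
    rw [ih b' h]
    exact h
  · refine le_of_forall_lt fun c hc => ?_
    rw [← ih c hc]
    exact Ordinal.nadd_lt_nadd_left' 0 hc

theorem Ordinal.nadd_assoc' (a b c : Ordinal.{u}) :
    Ordinal.nadd (Ordinal.nadd a b) c = Ordinal.nadd a (Ordinal.nadd b c) := by
  induction a using WellFoundedLT.induction generalizing b c with
  | _ a iha =>
  induction b using WellFoundedLT.induction generalizing c with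
  | _ b ihb =>
  induction c using WellFoundedLT.induction with
  | _ c ihc =>
  apply le_antisymm
  · rw [Ordinal.nadd_le_iff']
    refine ⟨fun d hd => ?_, fun c' hc' => ?_⟩
    · rcases (Ordinal.lt_nadd_iff' a b d).1 hd with ⟨a', ha', hd'⟩ | ⟨b', hb', hd'⟩
      · calc Ordinal.nadd d c ≤ Ordinal.nadd (Ordinal.nadd a' b) c :=
              Ordinal.nadd_le_nadd_right' hd' c
          _ = Ordinal.nadd a' (Ordinal.nadd b c) := iha a' ha' b c
          _ < _ := Ordinal.nadd_lt_nadd_right' ha' _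
      · calc Ordinal.nadd d c ≤ Ordinal.nadd (Ordinal.nadd a b') c :=
              Ordinal.nadd_le_nadd_right' hd' c
          _ = Ordinal.nadd a (Ordinal.nadd b' c) := ihb b' hb' c
          _ < _ := Ordinal.nadd_lt_nadd_left' a (Ordinal.nadd_lt_nadd_right' hb' c)
    · rw [ihc c' hc']
      exact Ordinal.nadd_lt_nadd_left' a (Ordinal.nadd_lt_nadd_left' b hc')
  · rw [Ordinal.nadd_le_iff']
    refine ⟨fun a' ha' => ?_, fun d hd => ?_⟩
    · rw [← iha a' ha' b c]
      exact Ordinal.nadd_lt_nadd_right' (Ordinal.nadd_lt_nadd_right' ha' b) c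
    · rcases (Ordinal.lt_nadd_iff' b c d).1 hd with ⟨b', hb', hd'⟩ | ⟨c', hc', hd'⟩
      · calc Ordinal.nadd a d ≤ Ordinal.nadd a (Ordinal.nadd b' c) :=
              Ordinal.nadd_le_nadd_left' a hd'
          _ = Ordinal.nadd (Ordinal.nadd a b') c := (ihb b' hb' c).symm
          _ < _ := Ordinal.nadd_lt_nadd_right' (Ordinal.nadd_lt_nadd_left' a hb') c
      · calc Ordinal.nadd a d ≤ Ordinal.nadd a (Ordinal.nadd b c') :=
              Ordinal.nadd_le_nadd_left' a hd'
          _ = Ordinal.nadd (Ordinal.nadd a b) c' := (ihc c' hc').symm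
          _ < _ := Ordinal.nadd_lt_nadd_left' _ hc'

/-- A type synonym for ordinals with natural addition, as in the older Mathlib. -/
def NatOrdinal : Type (u + 1) := Ordinal.{u}

noncomputable instance NatOrdinal.instLinearOrder : LinearOrder NatOrdinal.{u} :=
  inferInstanceAs (LinearOrder Ordinal.{u})

noncomputable instance NatOrdinal.instZero : Zero NatOrdinal.{u} := ⟨(0 : Ordinal.{u})⟩

noncomputable instance NatOrdinal.instAdd : Add NatOrdinal.{u} := ⟨Ordinal.nadd⟩

noncomputable instance NatOrdinal.instAddCommMonoid : AddCommMonoid NatOrdinal.{u} where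
  add_assoc := Ordinal.nadd_assoc'
  zero_add := Ordinal.zero_nadd'
  add_zero := fun a => (Ordinal.nadd_comm' a 0).trans (Ordinal.zero_nadd' a)
  add_comm := Ordinal.nadd_comm'
  nsmul := nsmulRec
  nsmul_zero := fun _ => rfl
  nsmul_succ := fun _ _ => rfl

/-- The identity function between `Ordinal` and `NatOrdinal`. -/
noncomputable def Ordinal.toNatOrdinal : Ordinal.{u} ≃o NatOrdinal.{u} := OrderIso.refl _

/-- The identity function between `NatOrdinal` and `Ordinal`. -/
noncomputable def NatOrdinal.toOrdinal : NatOrdinal.{u} ≃o Ordinal.{u} := OrderIso.refl _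

/-- A colored list over `I` with colors in `Fin k`: a list of elements together with a list
of colors on its edges. -/
abbrev CL (I : Type*) (k : ℕ) := List I × List (Fin k)

/-- The empty colored list. -/
def nilCL {I : Type*} {k : ℕ} : CL I k := ([], [])

/-- A pair `(L, f)` is a genuine colored list: either both lists are empty, or there is one
color per edge, i.e. `f` has length `|L| - 1`. -/
def IsCL {I : Type*} {k : ℕ} (μ : CL I k) : Prop :=
  (μ.1 = [] ∧ μ.2 = []) ∨ μ.1.length = μ.2.length + 1

/-- `(L, f)` is an `(R₁, …, R_k)`-colored list: it is a colored list and whenever edge `i`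
has color `h`, every later element is `R h`-below `x_i`. -/
def IsRCL {I : Type*} {k : ℕ} (R : Fin k → I → I → Prop) (μ : CL I k) : Prop :=
  IsCL μ ∧ ∀ (i j : ℕ) (hi : i < μ.2.length) (hi' : i < μ.1.length)
    (hj : j < μ.1.length), i < j → R (μ.2[i]'hi) (μ.1[j]'hj) (μ.1[i]'hi')

/-- One-step extension of color `c` on colored lists: append one element, and (if the list
was nonempty) one edge of color `c`. -/
def ExtC {I : Type*} {k : ℕ} (c : Fin k) (μ' μ : CL I k) : Prop :=
  ∃ y : I, (μ = nilCL ∧ μ' = ([y], [])) ∨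
    (μ.1 ≠ [] ∧ μ'.1 = μ.1 ++ [y] ∧ μ'.2 = μ.2 ++ [c])

/-- One-step extension of some color. -/
def ExtCol {I : Type*} {k : ℕ} (μ' μ : CL I k) : Prop := ∃ c, ExtC c μ' μ

/-- A `k`-ary tree: a set of colored lists containing the empty list, closed under removing
the last element, in which every list has at most one one-step extension of each color. -/
structure IsTree {I : Type*} {k : ℕ} (T : Set (CL I k)) : Prop where
  nil_mem : nilCL ∈ T
  downward : ∀ l m : CL I k, l ∈ T → ExtCol l m → m ∈ T
  unique : ∀ l₁ l₂ l : CL I k, ∀ c : Fin k, l₁ ∈ T → l₂ ∈ T → l ∈ T →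
    ExtC c l₁ l → ExtC c l₂ l → l₁ = l₂

/-- An Erdős tree over `R₁, …, R_k`: a `k`-ary tree all of whose members are
`(R₁, …, R_k)`-colored lists. -/
def IsErdos {I : Type*} {k : ℕ} (R : Fin k → I → I → Prop) (T : Set (CL I k)) : Prop :=
  IsTree T ∧ ∀ μ ∈ T, IsRCL R μ

/-- One-step extension of `k`-ary trees: `T' ≻₁ T` iff `T' = T ∪ {μ}` where `μ ∉ T` is a
one-step extension of some member of `T`. -/
def ExtTree {I : Type*} {k : ℕ} (T' T : Set (CL I k)) : Prop :=
  ∃ (μ l : CL I k) (c : Fin k), l ∈ T ∧ μ ∉ T ∧ ExtC c μ l ∧ T' = T ∪ {μ}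

/-- `nmulNat γ m` is the `m`-fold natural (Hessenberg) sum `γ ⊕ ⋯ ⊕ γ`. -/
noncomputable def nmulNat (γ : Ordinal) : ℕ → Ordinal
  | 0 => 0
  | n + 1 => Ordinal.nadd (nmulNat γ n) γ

/-- Index of the last occurrence of the color `h` in `f` (meaningful when `h ∈ f`): the
position of the lowest edge of color `h`. -/
def lastIdx {k : ℕ} (f : List (Fin k)) (h : Fin k) : ℕ :=
  f.length - 1 - f.reverse.idxOf h

/-- `pval L f h` is `p^h_h`: the `h`-th component of the lowest element of `L` followed by
an edge of color `h`. -/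
def pval {k : ℕ} (L : List (Fin k → ℕ)) (f : List (Fin k)) (h : Fin k) : ℕ :=
  (L.getD (lastIdx f h) (fun _ => 0)) h

/-- The labelling `α` on (nonempty) colored lists over `I = ℕ^k`: the root `(z₁, …, z_k)`
gets `max_i (z_i + 1) ⊕ ω * (k - 1)`; a `j`-node `y` reached using exactly the colors
`h₁, …, h_j` gets `p^{h₁}_{h₁} ⊕ ⋯ ⊕ p^{h_j}_{h_j} ⊕ ω * (k - j)`, where
`y^h = (p^h_1, …, p^h_k)` is the lowest proper ancestor of `y` followed by an edge of color
`h`, `⊕` is the natural sum and `ω * m` the `m`-fold natural sum of `ω`. -/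
noncomputable def labelCL {k : ℕ} (μ : CL (Fin k → ℕ) k) : Ordinal.{0} :=
  if μ.2 = [] then
    Ordinal.nadd ((Finset.univ.sup fun i : Fin k => μ.1.headI i + 1 : ℕ) : Ordinal)
      (nmulNat Ordinal.omega0 (k - 1))
  else
    Ordinal.nadd
      (NatOrdinal.toOrdinal
        (∑ h ∈ μ.2.toFinset, Ordinal.toNatOrdinal ((pval μ.1 μ.2 h : Ordinal))))
      (nmulNat Ordinal.omega0 (k - μ.2.toFinset.card))

/-- `hNil k α = sup { hNil k β * k + 1 : β < α }`, with `* k` the `k`-fold natural sum;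
the ordinal height of the set of `k`-branching trees with decreasing labels `< α`. -/
noncomputable def hNil (k : ℕ) (α : Ordinal.{0}) : Ordinal.{0} :=
  ⨆ β : Set.Iio α, nmulNat (hNil k β.1) k + 1
termination_by α
decreasing_by exact β.2

/-- The vacant child positions of a `k`-ary tree `T`: pairs `(l, c)` where `l` is a node
(a nonempty member) of `T` having no one-step extension of color `c` in `T`. -/
def vacant {I : Type*} {k : ℕ} (T : Set (CL I k)) : Set (CL I k × Fin k) :=
  {p | p.1 ∈ T ∧ p.1 ≠ nilCL ∧ ¬∃ μ ∈ T, ExtC p.2 μ p.1}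

/-- `hhat T = ĥ(T) = h_k(T_α, ω·k)` for an Erdős tree `T` over `ℕ^k`: for the empty tree it
is `hNil k (ω·k)`, and for a nonempty tree it is the natural sum, over all vacant child
positions of `T`, of `hNil k β` where `β` is the `α`-label of the node owning the
position. -/
noncomputable def hhat {k : ℕ} (T : Set (CL (Fin k → ℕ) k)) : Ordinal.{0} :=
  @ite _ (∀ μ ∈ T, μ = nilCL) (Classical.dec _)
    (hNil k (Ordinal.omega0 * (k : Ordinal)))
    (NatOrdinal.toOrdinal
      (∑ᶠ p ∈ vacant T, Ordinal.toNatOrdinal (hNil k (labelCL p.1))))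


infixl:65 " ♯ " => Ordinal.nadd

namespace Ordinal

theorem nadd_le_iff {a b c : Ordinal.{u}} :
    a ♯ b ≤ c ↔ (∀ a' < a, a' ♯ b < c) ∧ ∀ b' < b, a ♯ b' < c :=
  nadd_le_iff' a b c

theorem nadd_lt_nadd_left {b c : Ordinal.{u}} (h : b < c) (a : Ordinal.{u}) : a ♯ b < a ♯ c :=
  nadd_lt_nadd_left' a h

theorem nadd_lt_nadd_right {b c : Ordinal.{u}} (h : b < c) (a : Ordinal.{u}) : b ♯ a < c ♯ a :=
  nadd_lt_nadd_right' h a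

theorem nadd_le_nadd_left {b c : Ordinal.{u}} (h : b ≤ c) (a : Ordinal.{u}) : a ♯ b ≤ a ♯ c :=
  nadd_le_nadd_left' a h

theorem nadd_le_nadd_right {b c : Ordinal.{u}} (h : b ≤ c) (a : Ordinal.{u}) : b ♯ a ≤ c ♯ a :=
  nadd_le_nadd_right' h a

theorem nadd_le_nadd {a b c d : Ordinal.{u}} (h1 : a ≤ b) (h2 : c ≤ d) : a ♯ c ≤ b ♯ d :=
  (nadd_le_nadd_right' h1 c).trans (nadd_le_nadd_left' b h2)

theorem nadd_comm (a b : Ordinal.{u}) : a ♯ b = b ♯ a := nadd_comm' a b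

theorem nadd_assoc (a b c : Ordinal.{u}) : a ♯ b ♯ c = a ♯ (b ♯ c) := nadd_assoc' a b c

theorem zero_nadd (a : Ordinal.{u}) : 0 ♯ a = a := zero_nadd' a

theorem nadd_zero (a : Ordinal.{u}) : a ♯ 0 = a := (nadd_comm' a 0).trans (zero_nadd' a)

theorem le_self_nadd {a b : Ordinal.{u}} : a ≤ a ♯ b :=
  calc a = a ♯ 0 := (nadd_zero a).symm
    _ ≤ a ♯ b := nadd_le_nadd_left' a zero_le

theorem le_nadd_self {a b : Ordinal.{u}} : a ≤ b ♯ a := by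
  rw [nadd_comm']
  exact le_self_nadd

theorem nadd_right_comm (a b c : Ordinal.{u}) : a ♯ b ♯ c = a ♯ c ♯ b := by
  rw [nadd_assoc', nadd_comm' b c, ← nadd_assoc']

theorem nadd_left_comm (a b c : Ordinal.{u}) : a ♯ (b ♯ c) = b ♯ (a ♯ c) := by
  rw [← nadd_assoc', nadd_comm' a b, nadd_assoc']

theorem add_le_nadd (a b : Ordinal.{u}) : a + b ≤ a ♯ b := by
  induction b using WellFoundedLT.induction with
  | _ b ih =>
  refine le_of_forall_lt fun c hc => ?_
  rcases lt_or_ge c a with h | h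
  · exact lt_of_lt_of_le h le_self_nadd
  · have hd : c - a < b := by
      have : a + (c - a) < a + b := by rwa [Ordinal.add_sub_cancel_of_le h]
      exact (add_lt_add_iff_left a).1 this
    calc c = a + (c - a) := (Ordinal.add_sub_cancel_of_le h).symm
      _ ≤ a ♯ (c - a) := ih _ hd
      _ < a ♯ b := nadd_lt_nadd_left' a hd

theorem nadd_succ' (a b : Ordinal.{u}) : a ♯ Order.succ b = Order.succ (a ♯ b) := by
  induction a using WellFoundedLT.induction with
  | _ a ih =>
  apply le_antisymm
  · rw [nadd_le_iff']
    refine ⟨fun a' ha' => ?_, fun b' hb' => ?_⟩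
    · rw [ih a' ha', Order.succ_lt_succ_iff]
      exact nadd_lt_nadd_right' ha' b
    · exact Order.lt_succ_iff.2 (nadd_le_nadd_left' a (Order.lt_succ_iff.1 hb'))
  · exact Order.succ_le_of_lt (nadd_lt_nadd_left' a (Order.lt_succ b))

theorem nadd_nat (a : Ordinal.{u}) (n : ℕ) : a ♯ (n : Ordinal) = a + n := by
  induction n with
  | zero => rw [Nat.cast_zero, add_zero]; exact nadd_zero a
  | succ n ih =>
    rw [Nat.cast_succ, Ordinal.add_one_eq_succ, nadd_succ', ih, ← Ordinal.add_one_eq_succ,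
      ← Ordinal.add_one_eq_succ, add_assoc]

theorem nadd_eq_add (a b : Ordinal.{u}) :
    a ♯ b = NatOrdinal.toOrdinal (Ordinal.toNatOrdinal a + Ordinal.toNatOrdinal b) := rfl

theorem toNatOrdinal_toOrdinal (a : Ordinal.{u}) :
    NatOrdinal.toOrdinal (Ordinal.toNatOrdinal a) = a := rfl

end Ordinal

theorem NatOrdinal.toOrdinal_toNatOrdinal (a : NatOrdinal.{u}) :
    Ordinal.toNatOrdinal (NatOrdinal.toOrdinal a) = a := rfl

noncomputable instance NatOrdinal.instIsOrderedCancelAddMonoid :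
    IsOrderedCancelAddMonoid NatOrdinal.{u} where
  add_le_add_left a b h c := Ordinal.nadd_le_nadd_right' h c
  le_of_add_le_add_left a b c h :=
    le_of_not_gt fun hc => absurd h (not_le.2 (Ordinal.nadd_lt_nadd_left' a hc))



open Ordinal


theorem nadd_lt_omega0' {a b : Ordinal.{0}} (ha : a < Ordinal.omega0) (hb : b < Ordinal.omega0) :
    a ♯ b < Ordinal.omega0 := by
  obtain ⟨n, rfl⟩ := Ordinal.lt_omega0.1 hb
  obtain ⟨m, rfl⟩ := Ordinal.lt_omega0.1 ha
  rw [Ordinal.nadd_nat, ← Nat.cast_add]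
  exact Ordinal.nat_lt_omega0 _

section gen
variable {D : Ordinal.{0}} (hD : 0 < D)
  (hP : ∀ x < D, ∀ y < D, x ♯ y < D)

include hD hP in
theorem naddN : ∀ b, b < Ordinal.omega0 → ∀ r < D, D * b ♯ r = D * b + r := by
  intro b
  induction b using Ordinal.induction with
  | h b IHb =>
    intro hb r
    induction r using Ordinal.induction with
    | h r IHr =>
      intro hr
      refine le_antisymm (Ordinal.nadd_le_iff.2 ⟨?_, ?_⟩) (Ordinal.add_le_nadd _ _)
      · intro a' ha'
        have hq : a' / D < b := (Ordinal.div_lt hD.ne').2 ha'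
        have hrem : a' % D < D := Ordinal.mod_lt a' hD.ne'
        have e : D * (a' / D) + a' % D = a' := Ordinal.div_add_mod a' D
        calc a' ♯ r = (D * (a' / D) + a' % D) ♯ r := by rw [e]
          _ ≤ (D * (a' / D) ♯ a' % D) ♯ r :=
              Ordinal.nadd_le_nadd_right (Ordinal.add_le_nadd _ _) r
          _ = D * (a' / D) ♯ (a' % D ♯ r) := Ordinal.nadd_assoc _ _ _
          _ = D * (a' / D) + (a' % D ♯ r) :=
              IHb _ hq (hq.trans hb) _ (hP _ hrem _ hr)
          _ < D * (a' / D) + D := add_lt_add_right (hP _ hrem _ hr) _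
          _ = D * Order.succ (a' / D) := (Ordinal.mul_succ _ _).symm
          _ ≤ D * b := mul_le_mul_right (Order.succ_le_of_lt hq) D
          _ ≤ D * b + r := le_self_add
      · intro r' hr'
        rw [IHr r' hr' (hr'.trans hr)]
        exact add_lt_add_right hr' _

include hD hP in
theorem naddK : ∀ N n m : ℕ, n + m = N →
    D * n ♯ D * m = D * (n + m : ℕ) := by
  intro N
  induction N using Nat.strong_induction_on with
  | _ N IH =>
    intro n m hnm
    subst hnm
    have key : ∀ n' m' : ℕ, n' + m' < n + m → ∀ a' < D * (n' + 1 : ℕ),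
        a' ♯ D * m' < D * ((n' + m' + 1 : ℕ)) := by
      intro n' m' hlt a' ha'
      have hq : a' / D < ((n' + 1 : ℕ) : Ordinal) := (Ordinal.div_lt hD.ne').2 ha'
      obtain ⟨q, hqe⟩ := Ordinal.lt_omega0.1 (hq.trans (Ordinal.nat_lt_omega0 _))
      have hqn : q ≤ n' := by
        rw [hqe] at hq
        exact_mod_cast Nat.lt_succ_iff.1 (by exact_mod_cast hq)
      have hrem : a' % D < D := Ordinal.mod_lt a' hD.ne'
      have e : D * (a' / D) + a' % D = a' := Ordinal.div_add_mod a' D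
      have e2 : D * (q : Ordinal) + a' % D = a' := by rw [← hqe, e]
      calc a' ♯ D * m' = (D * (q : Ordinal) + a' % D) ♯ D * m' := by rw [e2]
        _ ≤ (D * (q : Ordinal) ♯ a' % D) ♯ D * m' :=
            Ordinal.nadd_le_nadd_right (Ordinal.add_le_nadd _ _) _
        _ = (D * (q : Ordinal) ♯ D * m') ♯ a' % D := Ordinal.nadd_right_comm _ _ _
        _ = D * ((q + m' : ℕ)) ♯ a' % D := by
            rw [IH (q + m') (by omega) q m' rfl]
        _ = D * ((q + m' : ℕ)) + a' % D := naddN hD hP _ (Ordinal.nat_lt_omega0 _) _ hrem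
        _ < D * ((q + m' : ℕ)) + D := add_lt_add_right hrem _
        _ = D * Order.succ ((q + m' : ℕ) : Ordinal) := (Ordinal.mul_succ _ _).symm
        _ ≤ D * ((n' + m' + 1 : ℕ)) := by
            refine mul_le_mul_right ?_ D
            rw [Order.succ_le_iff]
            exact_mod_cast (by omega : q + m' < n' + m' + 1)
    refine le_antisymm (Ordinal.nadd_le_iff.2 ⟨?_, ?_⟩) ?_
    · rcases Nat.eq_zero_or_pos n with rfl | hn
      · intro a' ha'
        simp only [Nat.cast_zero, mul_zero] at ha'
        exact absurd ha' (not_lt_of_ge zero_le)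
      intro a' ha'
      have := key (n - 1) m (by omega) a' (by rwa [Nat.sub_add_cancel hn])
      rwa [show n - 1 + m + 1 = n + m by omega] at this
    · rcases Nat.eq_zero_or_pos m with rfl | hm
      · intro b' hb'
        simp only [Nat.cast_zero, mul_zero] at hb'
        exact absurd hb' (not_lt_of_ge zero_le)
      intro b' hb'
      rw [Ordinal.nadd_comm]
      have := key (m - 1) n (by omega) b' (by rwa [Nat.sub_add_cancel hm])
      rwa [show m - 1 + n + 1 = n + m by omega] at this
    · rw [Nat.cast_add, mul_add]; exact Ordinal.add_le_nadd _ _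

include hD hP in
theorem naddPstep : ∀ x < D * Ordinal.omega0, ∀ y < D * Ordinal.omega0,
    x ♯ y < D * Ordinal.omega0 := by
  intro x hx y hy
  obtain ⟨n, hn⟩ := Ordinal.lt_omega0.1 ((Ordinal.div_lt hD.ne').2 hx)
  obtain ⟨m, hm⟩ := Ordinal.lt_omega0.1 ((Ordinal.div_lt hD.ne').2 hy)
  have hrx : x % D < D := Ordinal.mod_lt x hD.ne'
  have hry : y % D < D := Ordinal.mod_lt y hD.ne'
  have ex : D * (n : Ordinal) + x % D = x := by rw [← hn, Ordinal.div_add_mod]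
  have ey : D * (m : Ordinal) + y % D = y := by rw [← hm, Ordinal.div_add_mod]
  calc x ♯ y = (D * (n:Ordinal) + x % D) ♯ (D * (m:Ordinal) + y % D) := by rw [ex, ey]
    _ ≤ (D * (n:Ordinal) ♯ x % D) ♯ (D * (m:Ordinal) ♯ y % D) :=
        Ordinal.nadd_le_nadd (Ordinal.add_le_nadd _ _) (Ordinal.add_le_nadd _ _)
    _ = (D * (n:Ordinal) ♯ D * (m:Ordinal)) ♯ (x % D ♯ y % D) := by
        rw [Ordinal.nadd_assoc, Ordinal.nadd_assoc, Ordinal.nadd_left_comm (x % D)]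
    _ = D * ((n + m : ℕ)) + (x % D ♯ y % D) := by
        rw [naddK hD hP (n+m) n m rfl, naddN hD hP _ (Ordinal.nat_lt_omega0 _) _
          (hP _ hrx _ hry)]
    _ < D * ((n + m : ℕ)) + D := add_lt_add_right (hP _ hrx _ hry) _
    _ = D * Order.succ ((n + m : ℕ) : Ordinal) := (Ordinal.mul_succ _ _).symm
    _ ≤ D * Ordinal.omega0 :=
        mul_le_mul_right (Order.succ_le_of_lt (Ordinal.nat_lt_omega0 _)) D

end gen

theorem nadd_lt_opow_omega0 (m : ℕ) : ∀ x : Ordinal.{0}, x < Ordinal.omega0 ^ (m : Ordinal) →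
    ∀ y : Ordinal.{0}, y < Ordinal.omega0 ^ (m : Ordinal) →
      x ♯ y < Ordinal.omega0 ^ (m : Ordinal) := by
  induction m with
  | zero =>
    intro x hx y hy
    simp only [Nat.cast_zero, Ordinal.opow_zero, Ordinal.lt_one_iff_zero] at *
    subst hx; subst hy; exact Ordinal.zero_nadd 0
  | succ m IH =>
    have hD : (0:Ordinal) < Ordinal.omega0 ^ (m : Ordinal) :=
      Ordinal.opow_pos _ Ordinal.omega0_pos
    have e : Ordinal.omega0 ^ ((m+1 : ℕ) : Ordinal)
        = Ordinal.omega0 ^ (m : Ordinal) * Ordinal.omega0 := by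
      rw [Nat.cast_succ, Ordinal.opow_add, Ordinal.opow_one]
    rw [e]
    exact naddPstep hD IH


theorem hNil_eq (k : ℕ) (γ : Ordinal.{0}) :
    hNil k γ = ⨆ β : Set.Iio γ, nmulNat (hNil k β.1) k + 1 := by
  rw [hNil]

theorem nmulNat_le_nmulNat {x y : Ordinal} (h : x ≤ y) (n : ℕ) :
    nmulNat x n ≤ nmulNat y n := by
  induction n with
  | zero => exact le_rfl
  | succ n IH => exact Ordinal.nadd_le_nadd IH h

theorem le_nmulNat (x : Ordinal) {n : ℕ} (hn : 1 ≤ n) : x ≤ nmulNat x n := by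
  cases n with
  | zero => omega
  | succ n => exact Ordinal.le_nadd_self

theorem nmulNat_lt_omega0 {x : Ordinal.{0}} (h : x < Ordinal.omega0) (n : ℕ) :
    nmulNat x n < Ordinal.omega0 := by
  induction n with
  | zero => exact Ordinal.omega0_pos
  | succ n IH => exact nadd_lt_omega0' IH h

theorem nmulNat_lt_opow {x : Ordinal.{0}} {m : ℕ} (h : x < Ordinal.omega0 ^ (m : Ordinal))
    (n : ℕ) : nmulNat x n < Ordinal.omega0 ^ (m : Ordinal) := by
  induction n with
  | zero => exact Ordinal.opow_pos _ Ordinal.omega0_pos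
  | succ n IH => exact nadd_lt_opow_omega0 m _ IH _ h

theorem nmulNat_omega0 (m : ℕ) :
    nmulNat (Ordinal.omega0 : Ordinal.{0}) m = Ordinal.omega0 * m := by
  induction m with
  | zero => simp [nmulNat]
  | succ m IH =>
    show nmulNat Ordinal.omega0 m ♯ Ordinal.omega0 = _
    rw [IH]
    have := naddK (D := Ordinal.omega0) Ordinal.omega0_pos
      (fun x hx y hy => nadd_lt_omega0' hx hy) (m + 1) m 1 rfl
    rw [Nat.cast_one, mul_one] at this
    exact this

theorem hNil_le {k : ℕ} {γ a : Ordinal.{0}}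
    (h : ∀ β : Ordinal.{0}, β < γ → nmulNat (hNil k β) k + 1 ≤ a) : hNil k γ ≤ a := by
  rw [hNil_eq]
  exact Ordinal.iSup_le fun β => h β.1 β.2

theorem le_hNil_of_lt {k : ℕ} {β γ : Ordinal.{0}} (h : β < γ) :
    nmulNat (hNil k β) k + 1 ≤ hNil k γ := by
  rw [hNil_eq k γ]
  exact Ordinal.le_iSup (fun β : Set.Iio γ => nmulNat (hNil k β.1) k + 1) ⟨β, h⟩

theorem hNil_mono {k : ℕ} {β γ : Ordinal.{0}} (h : β ≤ γ) : hNil k β ≤ hNil k γ :=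
  hNil_le fun δ hδ => le_hNil_of_lt (hδ.trans_le h)

theorem self_le_hNil {k : ℕ} (hk : 1 ≤ k) (γ : Ordinal.{0}) : γ ≤ hNil k γ := by
  induction γ using Ordinal.induction with
  | h γ IH =>
    refine le_of_forall_lt fun δ hδ => ?_
    calc δ ≤ hNil k δ := IH δ hδ
      _ ≤ nmulNat (hNil k δ) k := le_nmulNat _ hk
      _ < nmulNat (hNil k δ) k + 1 := lt_add_one _
      _ ≤ hNil k γ := le_hNil_of_lt hδ

theorem hNil_lt_hNil {k : ℕ} (hk : 1 ≤ k) {β γ : Ordinal.{0}} (h : β < γ) :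
    hNil k β < hNil k γ :=
  lt_of_le_of_lt (le_nmulNat _ hk) (lt_of_lt_of_le (lt_add_one _) (le_hNil_of_lt h))

theorem nmulNat_hNil_lt {k : ℕ} {β γ : Ordinal.{0}} (h : β < γ) :
    nmulNat (hNil k β) k < hNil k γ :=
  lt_of_lt_of_le (lt_add_one _) (le_hNil_of_lt h)

theorem hNil_zero (k : ℕ) : hNil k 0 = 0 := by
  rw [hNil_eq]
  haveI : IsEmpty (Set.Iio (0 : Ordinal.{0})) := ⟨fun x => not_lt_of_ge (zero_le (a := x.1)) x.2⟩
  exact le_antisymm (Ordinal.iSup_le fun β => (this.false β).elim) zero_le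

theorem hNil_succ_le (k : ℕ) (γ : Ordinal.{0}) :
    hNil k (γ + 1) ≤ nmulNat (hNil k γ) k + 1 :=
  hNil_le fun δ hδ => by
    have : δ ≤ γ := by
      rw [Ordinal.add_one_eq_succ] at hδ
      exact Order.lt_succ_iff.1 hδ
    exact add_le_add_left (nmulNat_le_nmulNat (hNil_mono this) k) 1

theorem hNil_nat_lt_omega0 (k : ℕ) (n : ℕ) : hNil k (n : Ordinal) < Ordinal.omega0 := by
  induction n with
  | zero => rw [Nat.cast_zero, hNil_zero]; exact Ordinal.omega0_pos
  | succ n IH =>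
    rw [Nat.cast_succ]
    refine lt_of_le_of_lt (hNil_succ_le k _) ?_
    obtain ⟨j, hj⟩ := Ordinal.lt_omega0.1 (nmulNat_lt_omega0 IH k)
    rw [hj, ← Nat.cast_succ]
    exact Ordinal.nat_lt_omega0 _

theorem hNil_omega0 {k : ℕ} (hk : 1 ≤ k) : hNil k Ordinal.omega0 = Ordinal.omega0 := by
  refine le_antisymm (hNil_le fun δ hδ => ?_) (self_le_hNil hk _)
  obtain ⟨n, rfl⟩ := Ordinal.lt_omega0.1 hδ
  obtain ⟨j, hj⟩ := Ordinal.lt_omega0.1 (nmulNat_lt_omega0 (hNil_nat_lt_omega0 k n) k)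
  rw [hj, ← Nat.cast_succ]
  exact (Ordinal.nat_lt_omega0 _).le


theorem nmulNat_count_mono (x : Ordinal) {n m : ℕ} (h : n ≤ m) :
    nmulNat x n ≤ nmulNat x m := by
  induction m with
  | zero => obtain rfl : n = 0 := Nat.le_zero.1 h; exact le_rfl
  | succ m IH =>
    rcases Nat.eq_or_lt_of_le h with rfl | h'
    · exact le_rfl
    · exact (IH (Nat.lt_succ_iff.1 h')).trans Ordinal.le_self_nadd

theorem hNil_omega0_mul_succ {k m : ℕ} (hk : 2 ≤ k) (hm : 1 ≤ m)
    (Hm : hNil k (Ordinal.omega0 * m) = Ordinal.omega0 ^ (m : Ordinal)) :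
    hNil k (Ordinal.omega0 * (m + 1 : ℕ)) = Ordinal.omega0 ^ ((m + 1 : ℕ) : Ordinal) := by
  have hlim : Order.IsSuccLimit (Ordinal.omega0 ^ ((m + 1 : ℕ) : Ordinal)) := by
    rw [Nat.cast_succ, Ordinal.opow_add, Ordinal.opow_one]
    exact Ordinal.isSuccLimit_mul_right (Ordinal.opow_pos _ Ordinal.omega0_pos) Ordinal.isSuccLimit_omega0
  have hmm : (Ordinal.omega0 ^ (m : Ordinal)) < Ordinal.omega0 ^ ((m + 1 : ℕ) : Ordinal) := by
    rw [Ordinal.opow_lt_opow_iff_right Ordinal.one_lt_omega0]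
    exact_mod_cast Nat.lt_succ_self m
  have hsplit : Ordinal.omega0 * ((m + 1 : ℕ) : Ordinal) =
      Ordinal.omega0 * m + Ordinal.omega0 := by
    rw [Nat.cast_succ, mul_add, mul_one]
  have upper : ∀ n : ℕ, hNil k (Ordinal.omega0 * m + n) <
      Ordinal.omega0 ^ ((m + 1 : ℕ) : Ordinal) := by
    intro n
    induction n with
    | zero => rw [Nat.cast_zero, add_zero, Hm]; exact hmm
    | succ n IH =>
      rw [Nat.cast_succ, ← add_assoc]
      refine lt_of_le_of_lt (hNil_succ_le k _) ?_
      have := nmulNat_lt_opow IH k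
      rw [Ordinal.add_one_eq_succ]
      exact hlim.succ_lt this
  have lower : ∀ n : ℕ, Ordinal.omega0 ^ (m : Ordinal) * ((2 ^ n : ℕ) : Ordinal) ≤
      hNil k (Ordinal.omega0 * m + n) := by
    intro n
    induction n with
    | zero => rw [Nat.cast_zero, add_zero, pow_zero, Nat.cast_one, mul_one, Hm]
    | succ n IH =>
      rw [Nat.cast_succ, ← add_assoc]
      set X : Ordinal.{0} := Ordinal.omega0 ^ (m : Ordinal) * ((2 ^ n : ℕ) : Ordinal) with hX
      have h4 : nmulNat X 2 = X ♯ X := by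
        show (nmulNat X 0 ♯ X) ♯ X = X ♯ X
        rw [show nmulNat X 0 = 0 from rfl, Ordinal.zero_nadd]
      calc Ordinal.omega0 ^ (m : Ordinal) * ((2 ^ (n + 1) : ℕ) : Ordinal)
          = X + X := by
            rw [hX, ← mul_add, ← Nat.cast_add, ← Nat.two_pow_succ]
        _ ≤ X ♯ X := Ordinal.add_le_nadd _ _
        _ = nmulNat X 2 := h4.symm
        _ ≤ nmulNat X k := nmulNat_count_mono X hk
        _ ≤ nmulNat (hNil k (Ordinal.omega0 * m + n)) k := nmulNat_le_nmulNat IH k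
        _ ≤ nmulNat (hNil k (Ordinal.omega0 * m + n)) k + 1 := le_self_add
        _ ≤ hNil k (Ordinal.omega0 * m + n + 1) := le_hNil_of_lt (lt_add_one _)
  refine le_antisymm (hNil_le fun δ hδ => ?_) ?_
  · rw [hsplit] at hδ
    have hδ2 : hNil k δ < Ordinal.omega0 ^ ((m + 1 : ℕ) : Ordinal) := by
      rcases lt_or_ge δ (Ordinal.omega0 * m) with h | h
      · refine lt_of_le_of_lt (hNil_mono h.le) ?_
        rw [Hm]; exact hmm
      · have hd : δ - Ordinal.omega0 * m < Ordinal.omega0 := by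
          by_contra hcon
          push_neg at hcon
          have h2 := add_le_add_right hcon (Ordinal.omega0 * (m : Ordinal))
          rw [Ordinal.add_sub_cancel_of_le h] at h2
          exact absurd hδ (not_lt.2 h2)
        obtain ⟨n, hn⟩ := Ordinal.lt_omega0.1 hd
        have hδ3 : δ = Ordinal.omega0 * m + n := by
          rw [← hn, Ordinal.add_sub_cancel_of_le h]
        rw [hδ3]; exact upper n
    have := nmulNat_lt_opow hδ2 k
    rw [Ordinal.add_one_eq_succ, Order.succ_le_iff]
    exact this
  · have hres : Ordinal.omega0 ^ ((m + 1 : ℕ) : Ordinal) =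
        Ordinal.omega0 ^ (m : Ordinal) * Ordinal.omega0 := by
      rw [Nat.cast_succ, Ordinal.opow_add, Ordinal.opow_one]
    rw [hres, Ordinal.mul_le_iff_of_isSuccLimit Ordinal.isSuccLimit_omega0]
    intro b hb
    obtain ⟨n, rfl⟩ := Ordinal.lt_omega0.1 hb
    calc Ordinal.omega0 ^ (m : Ordinal) * n
        ≤ Ordinal.omega0 ^ (m : Ordinal) * ((2 ^ n : ℕ) : Ordinal) :=
          mul_le_mul_right (by exact_mod_cast (@Nat.lt_two_pow_self n).le) _
      _ ≤ hNil k (Ordinal.omega0 * m + n) := lower n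
      _ ≤ hNil k (Ordinal.omega0 * (m + 1 : ℕ)) := by
          refine hNil_mono ?_
          rw [hsplit]
          exact add_le_add_right (Ordinal.nat_lt_omega0 n).le _

theorem hNil_omega0_mul {k : ℕ} (hk : 1 ≤ k) :
    hNil k (Ordinal.omega0 * k) = Ordinal.omega0 ^ (k : Ordinal) := by
  have base : hNil k (Ordinal.omega0 * ((1:ℕ) : Ordinal)) =
      Ordinal.omega0 ^ (((1:ℕ) : ℕ) : Ordinal) := by
    rw [Nat.cast_one, mul_one, Ordinal.opow_one]
    exact hNil_omega0 hk
  rcases eq_or_lt_of_le hk with h1 | h2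
  · rw [← h1, Nat.cast_one, mul_one, Ordinal.opow_one]
    exact hNil_omega0 le_rfl
  · have main : ∀ m : ℕ, 1 ≤ m → hNil k (Ordinal.omega0 * m) =
        Ordinal.omega0 ^ (m : Ordinal) := by
      intro m hm
      induction m with
      | zero => omega
      | succ m IH =>
        rcases Nat.eq_zero_or_pos m with rfl | hm'
        · simpa using base
        · exact hNil_omega0_mul_succ h2 hm' (IH hm')
    exact main k hk

section comb

variable {I : Type*} {k : ℕ}

theorem extC_fst_ne_nil {c : Fin k} {μ l : CL I k} (h : ExtC c μ l) : μ.1 ≠ [] := by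
  obtain ⟨y, h | h⟩ := h
  · rw [h.2]; simp
  · rw [h.2.1]; simp

theorem eq_nilCL {μ : CL I k} (hcl : IsCL μ) (h : μ.1 = []) : μ = nilCL := by
  rcases hcl with ⟨h1, h2⟩ | hlen
  · exact Prod.ext h1 h2
  · rw [h] at hlen; simp at hlen

theorem extC_ne_nilCL {c : Fin k} {μ l : CL I k} (h : ExtC c μ l) : μ ≠ nilCL := by
  intro he
  exact extC_fst_ne_nil h (by rw [he]; rfl)

theorem extC_not_self {c : Fin k} {μ : CL I k} (h : ExtC c μ μ) : False := by
  obtain ⟨y, ⟨h1, h2⟩ | ⟨h1, h2, h3⟩⟩ := h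
  · rw [h2] at h1; simp [nilCL] at h1
  · have := congrArg List.length h2; simp at this

theorem extC_inj {c₁ c : Fin k} {μ p l : CL I k} (h1 : ExtC c₁ μ p) (h2 : ExtC c μ l)
    (hp : p ≠ nilCL) (hcl : IsCL p) : p = l ∧ c₁ = c := by
  obtain ⟨y1, H1⟩ := h1
  obtain ⟨y2, H2⟩ := h2
  rcases H1 with ⟨e1, _⟩ | ⟨e1, e2, e3⟩
  · exact absurd e1 hp
  rcases H2 with ⟨f1, f2⟩ | ⟨f1, f2, f3⟩
  · rw [f2] at e2
    have hlen := congrArg List.length e2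
    simp only [List.length_cons, List.length_nil, List.length_append] at hlen
    exact absurd (List.length_eq_zero_iff.1 (by omega)) e1
  · have e4 : p.1 ++ [y1] = l.1 ++ [y2] := by rw [← e2, ← f2]
    have e5 : p.2 ++ [c₁] = l.2 ++ [c] := by rw [← e3, ← f3]
    obtain ⟨hp1, _⟩ := List.append_inj' e4 rfl
    obtain ⟨hp2, hc⟩ := List.append_inj' e5 rfl
    exact ⟨Prod.ext hp1 hp2, by simpa using hc⟩

theorem exists_singleton_mem {R : Fin k → I → I → Prop} {T : Set (CL I k)}
    (hT : IsErdos R T) :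
    ∀ (n : ℕ) (ν : CL I k), ν ∈ T → ν ≠ nilCL → ν.1.length ≤ n →
      ∃ z : I, (([z], []) : CL I k) ∈ T := by
  intro n
  induction n with
  | zero =>
    intro ν hν hne hlen
    exact absurd (eq_nilCL (hT.2 ν hν).1 (List.length_eq_zero_iff.1 (by omega))) hne
  | succ n IH =>
    intro ν hν hne hlen
    have hcl := (hT.2 ν hν).1
    have h1 : ν.1 ≠ [] := fun h => hne (eq_nilCL hcl h)
    rcases hcl with ⟨e, _⟩ | hl
    · exact absurd e h1
    by_cases hone : ν.1.length = 1
    · obtain ⟨z, hz⟩ := List.length_eq_one_iff.1 hone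
      have h2 : ν.2 = [] := List.length_eq_zero_iff.1 (by omega)
      exact ⟨z, by rw [show (([z], []) : CL I k) = ν from (Prod.ext hz h2).symm]; exact hν⟩
    · have hlen2 : 2 ≤ ν.1.length := by
        have := List.length_pos_iff.2 h1; omega
      have h2 : ν.2 ≠ [] := by
        intro h; rw [h] at hl; simp at hl; omega
      have hd1 : ν.1.dropLast ≠ [] := by
        intro h
        have := congrArg List.length h
        simp [List.length_dropLast] at this
        omega
      have hext : ExtCol ν (ν.1.dropLast, ν.2.dropLast) := by
        refine ⟨ν.2.getLast h2, ν.1.getLast h1, Or.inr ⟨hd1, ?_, ?_⟩⟩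
        · exact (List.dropLast_append_getLast h1).symm
        · exact (List.dropLast_append_getLast h2).symm
      have hmem := hT.1.downward ν _ hν hext
      have hne' : (ν.1.dropLast, ν.2.dropLast) ≠ nilCL := by
        intro h
        exact hd1 (congrArg Prod.fst h)
      refine IH _ hmem hne' ?_
      simp only [List.length_dropLast]
      omega

end comb

section comb2

variable {I : Type*} {k : ℕ} {R : Fin k → I → I → Prop}

theorem lc_mem_vacant {T : Set (CL I k)} {μ l : CL I k} {c : Fin k}
    (hT' : IsErdos R (T ∪ {μ})) (hl : l ∈ T) (hμ : μ ∉ T) (hext : ExtC c μ l)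
    (hlne : l ≠ nilCL) : (l, c) ∈ vacant T := by
  refine ⟨hl, hlne, ?_⟩
  rintro ⟨ν, hν, hextν⟩
  have := hT'.1.unique ν μ l c (Or.inl hν) (Or.inr rfl) (Or.inl hl) hextν hext
  exact hμ (this ▸ hν)

theorem l_eq_nil_case {T : Set (CL I k)} {μ l : CL I k} {c : Fin k}
    (hT : IsErdos R T) (hT' : IsErdos R (T ∪ {μ})) (hl : l ∈ T) (hμ : μ ∉ T)
    (hext : ExtC c μ l) (hlnil : l = nilCL) {ν : CL I k} (hν : ν ∈ T)
    (hνne : ν ≠ nilCL) : False := by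
  obtain ⟨z, hz⟩ := exists_singleton_mem hT ν.1.length ν hν hνne le_rfl
  have hext0 : ExtC c (([z], []) : CL I k) nilCL := ⟨z, Or.inl ⟨rfl, rfl⟩⟩
  rw [hlnil] at hl hext
  have := hT'.1.unique μ (([z], []) : CL I k) nilCL c (Or.inr rfl) (Or.inl hz)
    (Or.inl hl) hext hext0
  exact hμ (this ▸ hz)

theorem vacant_union_ext {T : Set (CL I k)} {μ l : CL I k} {c : Fin k}
    (hT : IsErdos R T) (hT' : IsErdos R (T ∪ {μ})) (hl : l ∈ T) (hμ : μ ∉ T)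
    (hext : ExtC c μ l) :
    vacant (T ∪ {μ}) = {p : CL I k × Fin k | p.1 = μ} ∪ (vacant T \ {(l, c)}) := by
  ext p
  constructor
  · rintro ⟨hp1, hpne, hpno⟩
    rcases hp1 with hp1 | hp1
    · right
      refine ⟨⟨hp1, hpne, fun ⟨ν, hν, hextν⟩ => hpno ⟨ν, Or.inl hν, hextν⟩⟩, ?_⟩
      intro hpe
      have hpe' : p = (l, c) := hpe
      apply hpno
      refine ⟨μ, Or.inr rfl, ?_⟩
      rw [hpe']
      exact hext
    · exact Or.inl hp1
  · rintro (hp | ⟨⟨hp1, hpne, hpno⟩, hplc⟩)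
    · have hp : p.1 = μ := hp
      refine ⟨Or.inr hp, ?_, ?_⟩
      · rw [hp]; exact extC_ne_nilCL hext
      · rintro ⟨ν, hν, hextν⟩
        rw [hp] at hextν
        rcases hν with hν | hν
        · exact hμ (hT.1.downward ν μ hν ⟨p.2, hextν⟩)
        · have hν : ν = μ := hν
          rw [hν] at hextν
          exact extC_not_self hextν
    · refine ⟨Or.inl hp1, hpne, ?_⟩
      rintro ⟨ν, hν, hextν⟩
      rcases hν with hν | hν
      · exact hpno ⟨ν, hν, hextν⟩
      · have hν : ν = μ := hν
        rw [hν] at hextν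
        have := extC_inj hextν hext hpne (hT.2 p.1 hp1).1
        exact hplc (show p ∈ ({(l,c)} : Set _) from Prod.ext this.1 this.2)

theorem vacant_subset_prod {T : Set (CL I k)} :
    vacant T ⊆ T ×ˢ (Set.univ : Set (Fin k)) := fun p hp =>
  Set.mem_prod.2 ⟨hp.1, Set.mem_univ _⟩

theorem vacant_finite {T : Set (CL I k)} (hT : T.Finite) : (vacant T).Finite :=
  Set.Finite.subset (hT.prod Set.finite_univ) vacant_subset_prod

end comb2

section labels

theorem toOrdinal_add (x y : NatOrdinal) :
    NatOrdinal.toOrdinal (x + y) = NatOrdinal.toOrdinal x ♯ NatOrdinal.toOrdinal y := by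
  rw [Ordinal.nadd_eq_add, NatOrdinal.toOrdinal_toNatOrdinal, NatOrdinal.toOrdinal_toNatOrdinal]

theorem toOrdinal_sum_lt {ι : Type*} (s : Finset ι) (g : ι → NatOrdinal) {c : Ordinal.{0}}
    (h0 : 0 < c) (hc : ∀ x < c, ∀ y < c, x ♯ y < c)
    (hg : ∀ i ∈ s, NatOrdinal.toOrdinal (g i) < c) :
    NatOrdinal.toOrdinal (∑ i ∈ s, g i) < c := by
  classical
  induction s using Finset.induction with
  | empty => exact h0
  | insert a s ha IH =>
    rw [Finset.sum_insert ha, toOrdinal_add]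
    exact hc _ (hg _ (Finset.mem_insert_self _ _)) _
      (IH fun i hi => hg i (Finset.mem_insert_of_mem hi))

theorem nat_nadd_nmulNat_omega0_lt (n m M : ℕ) (h : m < M) :
    ((n : Ordinal.{0}) ♯ nmulNat Ordinal.omega0 m) < Ordinal.omega0 * M := by
  rw [nmulNat_omega0, Ordinal.nadd_comm, Ordinal.nadd_nat]
  calc Ordinal.omega0 * m + n < Ordinal.omega0 * m + Ordinal.omega0 :=
        add_lt_add_right (Ordinal.nat_lt_omega0 n) _
    _ = Ordinal.omega0 * ((m : Ordinal) + 1) := by rw [mul_add_one]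
    _ ≤ Ordinal.omega0 * M := by
        refine mul_le_mul_right ?_ _
        rw [← Nat.cast_succ]
        exact_mod_cast Nat.succ_le_of_lt h

theorem labelCL_lt_omega0_mul {k : ℕ} (hk : 1 ≤ k) (μ : CL (Fin k → ℕ) k) :
    labelCL μ < Ordinal.omega0 * k := by
  rw [labelCL]
  by_cases h : μ.2 = []
  · rw [if_pos h]
    exact nat_nadd_nmulNat_omega0_lt _ _ _ (by omega)
  · rw [if_neg h]
    have hsum : NatOrdinal.toOrdinal
        (∑ h ∈ μ.2.toFinset, Ordinal.toNatOrdinal ((pval μ.1 μ.2 h : Ordinal)))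
        < Ordinal.omega0 := by
      refine toOrdinal_sum_lt _ _ Ordinal.omega0_pos
        (fun x hx y hy => nadd_lt_omega0' hx hy) fun i _ => ?_
      rw [Ordinal.toNatOrdinal_toOrdinal]
      exact Ordinal.nat_lt_omega0 _
    obtain ⟨n, hn⟩ := Ordinal.lt_omega0.1 hsum
    rw [hn]
    have hj : 1 ≤ μ.2.toFinset.card := by
      rcases List.exists_mem_of_ne_nil μ.2 h with ⟨a, ha⟩
      exact Finset.card_pos.2 ⟨a, List.mem_toFinset.2 ha⟩
    exact nat_nadd_nmulNat_omega0_lt _ _ _ (by omega)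

end labels

section decrease

theorem label_decrease {k : ℕ} {R : Fin k → (Fin k → ℕ) → (Fin k → ℕ) → Prop}
    (hR : ∀ (h : Fin k) (y z : Fin k → ℕ), R h y z ↔ y h < z h)
    {l : CL (Fin k → ℕ) k} (hl : IsRCL R l) (hlne : l.1 ≠ [])
    (c : Fin k) (y : Fin k → ℕ) :
    labelCL (l.1 ++ [y], l.2 ++ [c]) < labelCL l := by
  obtain ⟨L, f⟩ := l
  simp only at hlne
  have hlen : L.length = f.length + 1 := by
    rcases hl.1 with ⟨e, _⟩ | e
    · exact absurd e hlne
    · exact e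
  have hflt : f.length < L.length := by omega
  by_cases hf : f = []
  · subst hf
    obtain ⟨z, hz⟩ := List.length_eq_one_iff.1 (by simpa using hlen)
    subst hz
    rw [labelCL, labelCL]
    rw [if_neg (by simp), if_pos rfl]
    have hts : (([] : List (Fin k)) ++ [c]).toFinset = {c} := by simp
    rw [hts]
    simp only [Finset.sum_singleton, Finset.card_singleton]
    have hpv : pval (([z] : List (Fin k → ℕ)) ++ [y]) ([] ++ [c]) c = z c := by
      unfold pval lastIdx
      simp
    rw [hpv, Ordinal.toNatOrdinal_toOrdinal]
    refine Ordinal.nadd_lt_nadd_right ?_ _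
    have hle : z c + 1 ≤ Finset.univ.sup fun i : Fin k =>
        (([z] : List (Fin k → ℕ)).headI i + 1) :=
      Finset.le_sup (f := fun i : Fin k => ([z] : List (Fin k → ℕ)).headI i + 1)
        (Finset.mem_univ c)
    have : z c < Finset.univ.sup fun i : Fin k =>
        (([z] : List (Fin k → ℕ)).headI i + 1) := by
      simp only [List.headI] at hle ⊢
      omega
    exact_mod_cast this
  · -- f ≠ []
    have hfpos : 1 ≤ f.length := List.length_pos_iff.2 hf
    have hts : (f ++ [c]).toFinset = insert c f.toFinset := by
      rw [List.toFinset_append]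
      ext x; simp [or_comm]
    have hstab : ∀ h ∈ f.toFinset, h ≠ c →
        pval (L ++ [y]) (f ++ [c]) h = pval L f h := by
      intro h hh hne
      have hmem : h ∈ f.reverse := List.mem_reverse.2 (List.mem_toFinset.1 hh)
      have hidx : f.reverse.idxOf h < f.length := by
        have := List.idxOf_lt_length_iff.2 hmem
        simpa using this
      have hidx2 : (f ++ [c]).reverse.idxOf h = f.reverse.idxOf h + 1 := by
        rw [List.reverse_append]
        simp only [List.reverse_singleton, List.singleton_append]
        exact List.idxOf_cons_ne _ (Ne.symm hne)
      unfold pval lastIdx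
      rw [hidx2]
      have e1 : (f ++ [c]).length - 1 - (f.reverse.idxOf h + 1)
          = f.length - 1 - f.reverse.idxOf h := by
        simp only [List.length_append, List.length_singleton]
        omega
      rw [e1, List.getD_append _ _ _ _ (by omega)]
    have hnew : pval (L ++ [y]) (f ++ [c]) c = (L[f.length]'hflt) c := by
      unfold pval lastIdx
      rw [List.reverse_append]
      simp only [List.reverse_singleton, List.singleton_append, List.idxOf_cons_self]
      have e1 : (f ++ [c]).length - 1 - 0 = f.length := by simp
      rw [e1, List.getD_append _ _ _ _ hflt, List.getD_eq_getElem _ _ hflt]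
    rw [labelCL, labelCL]
    rw [if_neg (by simp [hf]), if_neg hf]
    by_cases hc : c ∈ f.toFinset
    · -- repeated color: strict decrease in the (finite) sum
      have hts2 : (f ++ [c]).toFinset = f.toFinset := by
        rw [hts, Finset.insert_eq_self.2 hc]
      rw [hts2]
      refine Ordinal.nadd_lt_nadd_right ?_ _
      refine (OrderIso.lt_iff_lt _).2 ?_
      -- the Erdős condition at the last edge of color c
      have hmemc : c ∈ f.reverse := List.mem_reverse.2 (List.mem_toFinset.1 hc)
      have hidx1 : f.reverse.idxOf c < f.length := by
        have := List.idxOf_lt_length_iff.2 hmemc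
        simpa using this
      set i1 := f.length - 1 - f.reverse.idxOf c with hi1def
      have hi1 : i1 < f.length := by omega
      have hfc : f[i1]'hi1 = c := by
        have h1 : f.reverse[f.reverse.idxOf c]'(by simpa using hidx1) = c :=
          List.getElem_idxOf _
        rw [List.getElem_reverse] at h1
        exact h1
      have hpvL : pval L f c = (L[i1]'(by omega : i1 < L.length)) c := by
        unfold pval lastIdx
        rw [List.getD_eq_getElem _ _ (show f.length - 1 - f.reverse.idxOf c < L.length
          by omega)]
      have hErd := hl.2 i1 f.length (by simpa using hi1) (by simpa using (by omega :
        i1 < L.length)) (by simpa using hflt) hi1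
      rw [(hR _ _ _)] at hErd
      simp only at hErd
      rw [hfc] at hErd
      -- hErd : L[f.length] c < L[i1] c
      refine Finset.sum_lt_sum ?_ ⟨c, hc, ?_⟩
      · intro h hh
        by_cases hhc : h = c
        · subst hhc
          refine le_of_lt ?_
          refine (OrderIso.lt_iff_lt _).2 ?_
          rw [hnew, hpvL]
          exact_mod_cast hErd
        · rw [hstab h hh hhc]
      · refine (OrderIso.lt_iff_lt _).2 ?_
        rw [hnew, hpvL]
        exact_mod_cast hErd
    · -- new color
      rw [hts, Finset.sum_insert (by simpa using hc),
        Finset.card_insert_of_notMem (by simpa using hc)]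
      have hsum : (∑ h ∈ f.toFinset,
            Ordinal.toNatOrdinal ((pval (L ++ [y]) (f ++ [c]) h : Ordinal)))
          = ∑ h ∈ f.toFinset, Ordinal.toNatOrdinal ((pval L f h : Ordinal)) :=
        Finset.sum_congr rfl fun h hh => by
          rw [hstab h hh (fun he => hc (he ▸ hh))]
      rw [hsum]
      set S := ∑ h ∈ f.toFinset, Ordinal.toNatOrdinal ((pval L f h : Ordinal)) with hS
      set j := f.toFinset.card with hj
      have hjk : j < k := by
        have h1 : f.toFinset ≠ Finset.univ := fun he => hc (he ▸ Finset.mem_univ c)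
        have h2 := Finset.card_lt_card (Finset.ssubset_univ_iff.2 h1)
        simpa using h2
      have hW : nmulNat (Ordinal.omega0 : Ordinal.{0}) (k - j)
          = nmulNat Ordinal.omega0 (k - (j + 1)) ♯ Ordinal.omega0 := by
        have he : k - j = (k - (j + 1)) + 1 := by omega
        rw [he]
        rfl
      have hconv : NatOrdinal.toOrdinal
            (Ordinal.toNatOrdinal ((pval (L ++ [y]) (f ++ [c]) c : Ordinal)) + S)
          = ((pval (L ++ [y]) (f ++ [c]) c : Ordinal)) ♯ NatOrdinal.toOrdinal S := by
        rw [toOrdinal_add, Ordinal.toNatOrdinal_toOrdinal]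
      rw [hconv, hW]
      set n := pval (L ++ [y]) (f ++ [c]) c
      set W' := nmulNat (Ordinal.omega0 : Ordinal.{0}) (k - (j + 1))
      calc ((n : Ordinal) ♯ NatOrdinal.toOrdinal S) ♯ W'
          = NatOrdinal.toOrdinal S ♯ ((n : Ordinal) ♯ W') := by
            rw [Ordinal.nadd_comm (n : Ordinal), Ordinal.nadd_assoc]
        _ < NatOrdinal.toOrdinal S ♯ (Ordinal.omega0 ♯ W') :=
            Ordinal.nadd_lt_nadd_left
              (Ordinal.nadd_lt_nadd_right (Ordinal.nat_lt_omega0 n) W') _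
        _ = NatOrdinal.toOrdinal S ♯ (W' ♯ Ordinal.omega0) := by
            rw [Ordinal.nadd_comm Ordinal.omega0]

end decrease

section assemble

theorem toOrdinal_nsmul (x : NatOrdinal) (n : ℕ) :
    NatOrdinal.toOrdinal (n • x) = nmulNat (NatOrdinal.toOrdinal x) n := by
  induction n with
  | zero => rfl
  | succ n IH =>
    rw [succ_nsmul, toOrdinal_add, IH]
    rfl

theorem fiber_eq_image {I : Type*} {k : ℕ} (μ : CL I k) :
    {p : CL I k × Fin k | p.1 = μ} = (fun c' : Fin k => (μ, c')) '' Set.univ := by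
  ext p
  constructor
  · intro hp
    refine ⟨p.2, Set.mem_univ _, ?_⟩
    show (μ, p.2) = p
    rw [show μ = p.1 from (show p.1 = μ from hp).symm]
  · rintro ⟨c', -, rfl⟩
    rfl

theorem finsum_fiber {k : ℕ} (μ : CL (Fin k → ℕ) k) :
    (∑ᶠ p ∈ {p : CL (Fin k → ℕ) k × Fin k | p.1 = μ},
      Ordinal.toNatOrdinal (hNil k (labelCL p.1)))
    = k • Ordinal.toNatOrdinal (hNil k (labelCL μ)) := by
  rw [fiber_eq_image, finsum_mem_image (fun a _ b _ h => congrArg Prod.snd h)]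
  rw [finsum_mem_univ, finsum_eq_sum_of_fintype]
  simp [Finset.sum_const]

theorem fiber_finite {I : Type*} {k : ℕ} (μ : CL I k) :
    ({p : CL I k × Fin k | p.1 = μ}).Finite := by
  rw [fiber_eq_image]
  exact Set.finite_univ.image _

theorem stmt_13' (k : ℕ) (hk : 1 ≤ k)
    (R : Fin k → (Fin k → ℕ) → (Fin k → ℕ) → Prop)
    (hR : ∀ (h : Fin k) (y z : Fin k → ℕ), R h y z ↔ y h < z h) :
    (∀ T T' : Set (CL (Fin k → ℕ) k), IsErdos R T → IsErdos R T' → T.Finite →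
      ExtTree T' T → hhat T' < hhat T) ∧
    hhat (k := k) {nilCL} = Ordinal.omega0 ^ (k : Ordinal) ∧
    (∀ T : Set (CL (Fin k → ℕ) k), IsErdos R T → T.Finite → (∃ μ ∈ T, μ ≠ nilCL) →
      hhat T < Ordinal.omega0 ^ (k : Ordinal)) := by
  refine ⟨?_, ?_, ?_⟩
  · -- part 1 : strict decrease along one-step extensions
    intro T T' hT hT' hfin hext
    obtain ⟨μ, l, c, hl, hμ, hextC, hTT'⟩ := hext
    subst hTT'
    have hμne : μ ≠ nilCL := extC_ne_nilCL hextC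
    have hcondT' : ¬ ∀ ν ∈ T ∪ {μ}, ν = nilCL := fun H => hμne (H μ (Or.inr rfl))
    have hvd := vacant_union_ext hT hT' hl hμ hextC
    by_cases hA : ∀ ν ∈ T, ν = nilCL
    · unfold hhat
      rw [if_neg hcondT', if_pos hA]
      have hvT : vacant T = ∅ := by
        ext p
        simp only [Set.mem_empty_iff_false, iff_false]
        rintro ⟨hp1, hpne, -⟩
        exact hpne (hA p.1 hp1)
      rw [hvT] at hvd
      simp only [Set.empty_diff, Set.union_empty] at hvd
      rw [hvd, finsum_fiber, toOrdinal_nsmul, Ordinal.toNatOrdinal_toOrdinal]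
      exact nmulNat_hNil_lt (labelCL_lt_omega0_mul hk μ)
    · push_neg at hA
      obtain ⟨ν, hν, hνne⟩ := hA
      have hlne : l ≠ nilCL := fun h => l_eq_nil_case hT hT' hl hμ hextC h hν hνne
      have hcondT : ¬ ∀ ν' ∈ T, ν' = nilCL := fun H => hνne (H ν hν)
      unfold hhat
      rw [if_neg hcondT', if_neg hcondT]
      have hdisj : Disjoint {p : CL (Fin k → ℕ) k × Fin k | p.1 = μ}
          (vacant T \ {(l, c)}) := by
        rw [Set.disjoint_left]
        rintro p hp1 ⟨hp2, -⟩
        exact hμ ((show p.1 = μ from hp1) ▸ hp2.1)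
      have hfinB : (vacant T \ {(l, c)}).Finite :=
        (vacant_finite hfin).subset Set.diff_subset
      have hlcv : (l, c) ∈ vacant T := lc_mem_vacant hT' hl hμ hextC hlne
      have hsplit : vacant T = {(l, c)} ∪ (vacant T \ {(l, c)}) := by
        rw [← Set.insert_eq, Set.insert_diff_singleton, Set.insert_eq_of_mem hlcv]
      rw [hsplit, finsum_mem_union (by
            rw [Set.disjoint_left]
            rintro p rfl ⟨-, hne⟩
            exact hne rfl)
          (Set.finite_singleton _) hfinB, finsum_mem_singleton]
      rw [hvd, finsum_mem_union hdisj (fiber_finite μ) hfinB]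
      -- key strict inequality for the new leaf
      have hcl : IsCL l := (hT.2 l hl).1
      obtain ⟨yy, hcase⟩ := hextC
      rcases hcase with ⟨e1, _⟩ | ⟨e1, e2, e3⟩
      · exact absurd e1 hlne
      have hμeq : μ = (l.1 ++ [yy], l.2 ++ [c]) := Prod.ext e2 e3
      have hlab : labelCL μ < labelCL l := by
        rw [hμeq]
        exact label_decrease hR (hT.2 l hl) e1 c yy
      have key : (k • Ordinal.toNatOrdinal (hNil k (labelCL μ)))
          < Ordinal.toNatOrdinal (hNil k (labelCL l)) := by
        have h2 : NatOrdinal.toOrdinal (k • Ordinal.toNatOrdinal (hNil k (labelCL μ)))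
            < NatOrdinal.toOrdinal (Ordinal.toNatOrdinal (hNil k (labelCL l))) := by
          rw [toOrdinal_nsmul, Ordinal.toNatOrdinal_toOrdinal,
            Ordinal.toNatOrdinal_toOrdinal]
          exact nmulNat_hNil_lt hlab
        exact (OrderIso.lt_iff_lt _).1 h2
      rw [finsum_fiber]
      refine (OrderIso.lt_iff_lt NatOrdinal.toOrdinal).2 ?_
      exact add_lt_add_left key _
  · unfold hhat
    rw [if_pos (show ∀ μ ∈ ({nilCL} : Set (CL (Fin k → ℕ) k)), μ = nilCL
      from fun μ hμ => hμ)]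
    exact hNil_omega0_mul hk
  · rintro T hT hfin ⟨ν, hν, hνne⟩
    unfold hhat
    rw [if_neg (fun H => hνne (H ν hν))]
    have hvfin := vacant_finite hfin
    rw [← Set.Finite.coe_toFinset hvfin, finsum_mem_coe_finset, ← hNil_omega0_mul hk]
    refine toOrdinal_sum_lt _ _ ?_ ?_ ?_
    · rw [hNil_omega0_mul hk]
      exact Ordinal.opow_pos _ Ordinal.omega0_pos
    · rw [hNil_omega0_mul hk]
      exact nadd_lt_opow_omega0 k
    · intro p _
      rw [Ordinal.toNatOrdinal_toOrdinal]
      exact hNil_lt_hNil hk (labelCL_lt_omega0_mul hk p.1)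

end assemble

/-- over `I = ℕ^k` with `R h y z ↔ y h < z h`, the map
`ĥ(T) = h_k(T_α, ω·k)` is strictly decreasing along one-step extensions of (finite) Erdős
trees over `R₁, …, R_k`; moreover `ĥ` maps Erdős trees into `ω^k + 1`, with
`ĥ(empty tree) = ω^k` and `ĥ(T) < ω^k` for every nonempty Erdős tree `T`. -/
theorem stmt_13 (k : ℕ) (hk : 1 ≤ k)
    (R : Fin k → (Fin k → ℕ) → (Fin k → ℕ) → Prop)
    (hR : ∀ (h : Fin k) (y z : Fin k → ℕ), R h y z ↔ y h < z h) :
    (∀ T T' : Set (CL (Fin k → ℕ) k), IsErdos R T → IsErdos R T' → T.Finite →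
      ExtTree T' T → hhat T' < hhat T) ∧
    hhat (k := k) {nilCL} = Ordinal.omega0 ^ (k : Ordinal) ∧
    (∀ T : Set (CL (Fin k → ℕ) k), IsErdos R T → T.Finite → (∃ μ ∈ T, μ ≠ nilCL) →
      hhat T < Ordinal.omega0 ^ (k : Ordinal)) := by
  exact stmt_13' k hk R hR
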